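/- Let W_q, W_k ∈ ℝ^{d×d}, let X = [x_1, …, x_{n_in}]ᵀ ∈ ℝ^{n_in×d} be a matrix of input embeddings, and let x_1^{(o)}, …, x_{n_out}^{(o)} ∈ ℝᵈ and x̂_1^{(o)}, …, x̂_{n_out}^{(o)} ∈ ℝᵈ be output embeddings and their approximations. Define the importance score vectors sᵀ = (1/n_out) Σ_{i=1}^{n_out} Softmax(x_i^{(o)T} W_q W_kᵀ Xᵀ / √d) and ŝᵀ = (1/n_out) Σ_{i=1}^{n_out} Softmax(x̂_i^{(o)T} W_q W_kᵀ Xᵀ / √d). If ‖x_i^{(o)} − x̂_i^{(o)}‖₂ ≤ ε for all i = 1, …, n_out, and ‖x_j‖₂ ≤ √d for all j = 1, …, n_in, then ‖s − ŝ‖₂ ≤ ε ‖W_q W_kᵀ‖₂, where ‖·‖₂ on matrices denotes the spectral norm. -/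

import Mathlib

open scoped BigOperators ENNReal

/-- Softmax map on `ℝⁿ`. -/
noncomputable def softmax {n : ℕ} (x : Fin n → ℝ) : Fin n → ℝ :=
  fun i => Real.exp (x i) / ∑ j, Real.exp (x j)

/-- Euclidean norm on `ℝⁿ`. -/
noncomputable def l2norm {n : ℕ} (x : Fin n → ℝ) : ℝ :=
  Real.sqrt (∑ i, x i ^ 2)

/-- Supremum norm on `ℝⁿ`. -/
noncomputable def linftyNorm {n : ℕ} (x : Fin n → ℝ) : ℝ :=
  ⨆ i, |x i|

/-- Spectral norm (operator norm w.r.t. Euclidean norms) of a real matrix. -/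
noncomputable def matSpectralNorm {m n : ℕ} (A : Matrix (Fin m) (Fin n) ℝ) : ℝ :=
  sSup { r | ∃ x : Fin n → ℝ, l2norm x ≤ 1 ∧ r = l2norm (A.mulVec x) }

/-- Smallest singular value of a square real matrix. -/
noncomputable def sigmaMin {d : ℕ} (W : Matrix (Fin d) (Fin d) ℝ) : ℝ :=
  sInf { r | ∃ x : Fin d → ℝ, l2norm x = 1 ∧ r = l2norm (W.mulVec x) }

/-- `‖X‖_{∞,2}`: the maximum Euclidean norm of a row of `X`. -/
noncomputable def maxRowNorm {n d : ℕ} (X : Matrix (Fin n) (Fin d) ℝ) : ℝ :=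
  ⨆ i, l2norm (X i)

/-!
Each logit `x_iᵀ W_q W_kᵀ x_j / √d` moves by at most `ε ‖W_q W_kᵀ‖₂` when `x_i` moves by `ε`,
because `‖x_j‖₂ ≤ √d`. Softmax is `1`-Lipschitz from `ℓ∞` to `ℓ²`: along the segment `a + t v`
its derivative is `p ⊙ (v - ⟨p, v⟩)` with `p` a probability vector, and the squared Euclidean
norm of that is at most the `p`-variance of `v`, hence at most `‖v‖∞²`. Averaging over the
outputs keeps the bound.
-/

open Finset Matrix

section Norms

variable {n : ℕ}

lemma l2norm_eq_norm_toLp (x : Fin n → ℝ) :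
    l2norm x = ‖(WithLp.toLp 2 x : EuclideanSpace ℝ (Fin n))‖ := by
  simp [l2norm, EuclideanSpace.norm_eq]

lemma l2norm_nonneg (x : Fin n → ℝ) : 0 ≤ l2norm x := Real.sqrt_nonneg _

lemma l2norm_smul (c : ℝ) (x : Fin n → ℝ) : l2norm (c • x) = |c| * l2norm x := by
  rw [l2norm_eq_norm_toLp, l2norm_eq_norm_toLp, WithLp.toLp_smul, norm_smul, Real.norm_eq_abs]

lemma l2norm_inv_smul_sum_le {m : ℕ} (hm : 0 < m) {f : Fin m → Fin n → ℝ} {c : ℝ}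
    (hf : ∀ i, l2norm (f i) ≤ c) : l2norm ((m : ℝ)⁻¹ • ∑ i, f i) ≤ c := by
  have hsum : l2norm (∑ i, f i) ≤ m * c := by
    simp_rw [l2norm_eq_norm_toLp, WithLp.toLp_sum] at hf ⊢
    simpa using (norm_sum_le _ _).trans (sum_le_card_nsmul univ _ c fun i _ => hf i)
  rw [l2norm_smul, abs_inv, Nat.abs_cast, inv_mul_le_iff₀ (by exact_mod_cast hm)]
  exact hsum

lemma abs_dotProduct_le (u x : Fin n → ℝ) : |u ⬝ᵥ x| ≤ l2norm u * l2norm x := by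
  rw [l2norm_eq_norm_toLp, l2norm_eq_norm_toLp]
  convert abs_real_inner_le_norm (WithLp.toLp 2 u : EuclideanSpace ℝ (Fin n)) (WithLp.toLp 2 x)
    using 2
  simp [EuclideanSpace.inner_eq_star_dotProduct, dotProduct_comm]

lemma abs_le_linftyNorm (x : Fin n → ℝ) (i : Fin n) : |x i| ≤ linftyNorm x :=
  le_ciSup (f := fun i => |x i|) (Finite.bddAbove_range _) i

lemma linftyNorm_nonneg (x : Fin n → ℝ) : 0 ≤ linftyNorm x :=
  Real.iSup_nonneg fun _ => abs_nonneg _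

end Norms

section SpectralNorm

variable {m n : ℕ}

lemma bddAbove_l2norm_mulVec_unitBall (A : Matrix (Fin m) (Fin n) ℝ) :
    BddAbove { r | ∃ x : Fin n → ℝ, l2norm x ≤ 1 ∧ r = l2norm (A *ᵥ x) } := by
  refine ⟨‖toEuclideanLin A |>.toContinuousLinearMap‖, ?_⟩
  rintro r ⟨x, hx, rfl⟩
  rw [l2norm_eq_norm_toLp] at hx ⊢
  simpa using (toEuclideanLin A |>.toContinuousLinearMap).le_of_opNorm_le_of_le le_rfl hx

lemma l2norm_mulVec_le (A : Matrix (Fin m) (Fin n) ℝ) (x : Fin n → ℝ) :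
    l2norm (A *ᵥ x) ≤ matSpectralNorm A * l2norm x := by
  rcases (l2norm_nonneg x).eq_or_lt with hx | hx
  · have : x = 0 := by simpa [l2norm_eq_norm_toLp, eq_comm (a := (0 : ℝ))] using hx
    simp [this, l2norm]
  · have hunit : l2norm (A *ᵥ ((l2norm x)⁻¹ • x)) ≤ matSpectralNorm A :=
      le_csSup (bddAbove_l2norm_mulVec_unitBall A)
        ⟨_, by rw [l2norm_smul, abs_inv, abs_of_pos hx, inv_mul_cancel₀ hx.ne'], rfl⟩
    rwa [mulVec_smul, l2norm_smul, abs_inv, abs_of_pos hx, inv_mul_le_iff₀ hx,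
      mul_comm] at hunit

lemma matSpectralNorm_nonneg (A : Matrix (Fin m) (Fin n) ℝ) : 0 ≤ matSpectralNorm A :=
  Real.sSup_nonneg fun _ ⟨_, _, hr⟩ => hr ▸ l2norm_nonneg _

lemma abs_dotProduct_mulVec_le (A : Matrix (Fin m) (Fin n) ℝ) (u : Fin m → ℝ) (x : Fin n → ℝ) :
    |u ⬝ᵥ A *ᵥ x| ≤ matSpectralNorm A * l2norm u * l2norm x :=
  calc |u ⬝ᵥ A *ᵥ x| ≤ l2norm u * l2norm (A *ᵥ x) := abs_dotProduct_le u _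
    _ ≤ l2norm u * (matSpectralNorm A * l2norm x) := by
        gcongr
        · exact l2norm_nonneg u
        · exact l2norm_mulVec_le A x
    _ = matSpectralNorm A * l2norm u * l2norm x := by ring

lemma abs_dotProduct_mulVec_div_le (A : Matrix (Fin m) (Fin n) ℝ) {u : Fin m → ℝ}
    {x : Fin n → ℝ} {ε c : ℝ} (hu : l2norm u ≤ ε) (hx : l2norm x ≤ c) :
    |u ⬝ᵥ A *ᵥ x / c| ≤ ε * matSpectralNorm A := by
  have hc : 0 ≤ c := (l2norm_nonneg x).trans hx
  have hε : 0 ≤ ε := (l2norm_nonneg u).trans hu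
  have hA := matSpectralNorm_nonneg A
  rw [abs_div, abs_of_nonneg hc]
  refine div_le_of_le_mul₀ hc (by positivity) ?_
  calc |u ⬝ᵥ A *ᵥ x| ≤ matSpectralNorm A * l2norm u * l2norm x := abs_dotProduct_mulVec_le A u x
    _ ≤ matSpectralNorm A * ε * c := by gcongr; exact l2norm_nonneg x
    _ = ε * matSpectralNorm A * c := by ring

end SpectralNorm

section Softmax

variable {n : ℕ}

lemma softmax_nonneg (x : Fin n → ℝ) (i : Fin n) : 0 ≤ softmax x i := by
  unfold softmax
  positivity

lemma sum_exp_pos (x : Fin n → ℝ) (i : Fin n) : 0 < ∑ j, Real.exp (x j) :=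
  (Real.exp_pos (x i)).trans_le (single_le_sum (fun j _ => (Real.exp_pos (x j)).le) (mem_univ i))

lemma sum_softmax [NeZero n] (x : Fin n → ℝ) : ∑ i, softmax x i = 1 := by
  simp only [softmax, ← sum_div]
  exact div_self (sum_exp_pos x 0).ne'

lemma hasDerivAt_softmax_add_smul (a v : Fin n → ℝ) (t : ℝ) :
    HasDerivAt (fun s => softmax (a + s • v))
      (fun i => softmax (a + t • v) i * (v i - ∑ j, softmax (a + t • v) j * v j)) t := by
  refine hasDerivAt_pi.2 fun i => ?_
  have hexp : ∀ j, HasDerivAt (fun s => Real.exp (a j + s * v j))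
      (Real.exp (a j + t * v j) * v j) t := fun j => by
    simpa using (((hasDerivAt_id t).mul_const (v j)).const_add (a j)).exp
  refine ((hexp i).fun_div (HasDerivAt.fun_sum fun j _ => hexp j)
    (sum_exp_pos _ i).ne').congr_deriv ?_
  have := (sum_exp_pos (a + t • v) i).ne'
  simp only [softmax, Pi.add_apply, Pi.smul_apply, smul_eq_mul, div_mul_eq_mul_div, ← sum_div]
    at this ⊢
  field_simp

lemma sum_sq_mul_sub_weightedMean_le {ι : Type*} [Fintype ι] {p v : ι → ℝ} {δ : ℝ}
    (hp : ∀ i, 0 ≤ p i) (hsum : ∑ i, p i = 1) (hv : ∀ i, |v i| ≤ δ) :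
    ∑ i, (p i * (v i - ∑ j, p j * v j)) ^ 2 ≤ δ ^ 2 := by
  set μ := ∑ j, p j * v j
  have hp1 : ∀ i, p i ≤ 1 := fun i => hsum ▸ single_le_sum (fun j _ => hp j) (mem_univ i)
  have hvar : ∑ i, p i * (v i - μ) ^ 2 = ∑ i, p i * v i ^ 2 - μ ^ 2 := by
    have hexpand : ∀ i, p i * (v i - μ) ^ 2 = p i * v i ^ 2 - 2 * μ * (p i * v i) + μ ^ 2 * p i :=
      fun i => by ring
    simp_rw [hexpand, sum_add_distrib, sum_sub_distrib, ← mul_sum, hsum]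
    ring
  have hsq : ∀ i, v i ^ 2 ≤ δ ^ 2 := fun i => by
    simpa using pow_le_pow_left₀ (abs_nonneg _) (hv i) 2
  -- `p i ≤ 1` lets one factor `p i` go; what is left is the variance of `v` under `p`.
  calc ∑ i, (p i * (v i - μ)) ^ 2 ≤ ∑ i, p i * (v i - μ) ^ 2 := sum_le_sum fun i _ => by
        rw [mul_pow]
        exact mul_le_mul_of_nonneg_right (by nlinarith [hp i, hp1 i]) (sq_nonneg _)
    _ = ∑ i, p i * v i ^ 2 - μ ^ 2 := hvar
    _ ≤ ∑ i, p i * δ ^ 2 := by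
        linarith [sq_nonneg μ, sum_le_sum fun i (_ : i ∈ univ) =>
          mul_le_mul_of_nonneg_left (hsq i) (hp i)]
    _ = δ ^ 2 := by rw [← sum_mul, hsum, one_mul]

theorem l2norm_softmax_sub_le_linftyNorm (a b : Fin n → ℝ) :
    l2norm (softmax b - softmax a) ≤ linftyNorm (b - a) := by
  rcases n.eq_zero_or_pos with rfl | hn
  · simpa [l2norm] using linftyNorm_nonneg (b - a)
  have := NeZero.of_pos hn
  set v := b - a
  set p : ℝ → Fin n → ℝ := fun t => softmax (a + t • v)
  have hderiv : ∀ t, HasDerivAt (fun s => (WithLp.toLp 2 (p s) : EuclideanSpace ℝ (Fin n)))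
      (WithLp.toLp 2 fun i => p t i * (v i - ∑ j, p t j * v j)) t := fun t =>
    (EuclideanSpace.equiv (Fin n) ℝ).symm.hasFDerivAt.comp_hasDerivAt t
      (hasDerivAt_softmax_add_smul a v t)
  have hbound : ∀ t, ‖(WithLp.toLp 2 fun i => p t i * (v i - ∑ j, p t j * v j) :
      EuclideanSpace ℝ (Fin n))‖ ≤ linftyNorm v := fun t => by
    rw [← l2norm_eq_norm_toLp, l2norm, ← Real.sqrt_sq (linftyNorm_nonneg v)]
    exact Real.sqrt_le_sqrt (sum_sq_mul_sub_weightedMean_le (softmax_nonneg _) (sum_softmax _)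
      (abs_le_linftyNorm v))
  simpa [p, v, l2norm_eq_norm_toLp, WithLp.toLp_sub] using
    norm_image_sub_le_of_norm_deriv_le_segment_01' (fun t _ => (hderiv t).hasDerivWithinAt)
      (fun t _ => hbound t)

end Softmax

/-- if `‖x_i^{(o)} − x̂_i^{(o)}‖₂ ≤ ε` for all `i` and `‖x_j‖₂ ≤ √d` for all `j`,
then the importance score vectors satisfy `‖s − ŝ‖₂ ≤ ε ‖W_q W_kᵀ‖₂`. -/
theorem importance_score_bound {d nin nout : ℕ} (hnout : 0 < nout)
    (Wq Wk : Matrix (Fin d) (Fin d) ℝ)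
    (X : Matrix (Fin nin) (Fin d) ℝ)
    (xo xohat : Fin nout → Fin d → ℝ) (ε : ℝ)
    (hxo : ∀ i, l2norm (xo i - xohat i) ≤ ε)
    (hX : ∀ j, l2norm (X j) ≤ Real.sqrt d) :
    l2norm
      (((nout : ℝ)⁻¹ • ∑ i, softmax fun j =>
          dotProduct (xo i) ((Wq * Wk.transpose).mulVec (X j)) / Real.sqrt d) -
        ((nout : ℝ)⁻¹ • ∑ i, softmax fun j =>
          dotProduct (xohat i) ((Wq * Wk.transpose).mulVec (X j)) / Real.sqrt d))
      ≤ ε * matSpectralNorm (Wq * Wk.transpose) := by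
  have hε : 0 ≤ ε := (l2norm_nonneg _).trans (hxo ⟨0, hnout⟩)
  rw [← smul_sub, ← sum_sub_distrib]
  refine l2norm_inv_smul_sum_le hnout fun i => (l2norm_softmax_sub_le_linftyNorm _ _).trans ?_
  refine Real.iSup_le (fun j => ?_) (mul_nonneg hε (matSpectralNorm_nonneg _))
  rw [Pi.sub_apply, ← sub_div, ← sub_dotProduct]
  exact abs_dotProduct_mulVec_div_le _ (hxo i) (hX j)
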